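/- arXiv:2403.16769 — 8 statements merged into one kernel-verified Lean document; each statement's English description precedes it below -/
import Mathlib

section
/- For every integer n ≥ 2, the one-relator group Γₙ = ⟨a, b | [a, b]ⁿ = 1⟩ is not virtually solvable: no finite-index subgroup of Γₙ is solvable. -/
/-!
`Γₙ` maps onto the group `R ≤ Perm ℤ` generated by the translation `a = (z ↦ z + 1)` and the
reflection `b` of the interval `[0, 2n - 2]`: the commutator `[a, b]` rotates `[0, 2n - 1]` by two
(so its `n`-th power is trivial), and `[[a, b], a]` is the 3-cycle `(0 2 2n)`. Commuting this
3-cycle with a translate gives a double transposition `(0 2)(A A+2)`; translating and multiplying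
these yields every `(2i 2i+2)(K+2i K+2i+2)`, so `σ ↦ σ` acting on the two blocks `2i` and `K + 2i`
embeds every finite symmetric group into `R`. Finally, if `N` is a solvable normal subgroup of
index `m`, then `A₅ ^ m` cannot embed: its solvable normal subgroups are trivial, so it would
inject into `G ⧸ N`, which has only `m < 60 ^ m` elements.
-/

open scoped commutatorElement

/-- The one-relator group `Γₙ = ⟨a, b | [a, b]ⁿ = 1⟩`, realized as the quotient of the free
group on two generators by the normal closure of `([a, b])ⁿ`. -/
abbrev GammaGroup (n : ℕ) : Type :=
  PresentedGroup ({⁅FreeGroup.of true, FreeGroup.of false⁆ ^ n} : Set (FreeGroup Bool))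

open Equiv Equiv.Perm

section VirtuallySolvable

variable {G : Type*} [Group G]

variable (G) in
def IsVirtuallySolvable : Prop :=
  ∃ H : Subgroup G, H.FiniteIndex ∧ Group.IsSolvable H

theorem IsVirtuallySolvable.of_surjective {G' : Type*} [Group G'] {f : G →* G'}
    (hf : Function.Surjective f) (hG : IsVirtuallySolvable G) : IsVirtuallySolvable G' := by
  obtain ⟨H, hH, _⟩ := hG
  refine ⟨H.map f, Subgroup.finiteIndex_iff.2 fun h0 => hH.index_ne_zero ?_,
    Group.isSolvable_of_surjective (f.subgroupMap_surjective H)⟩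
  exact Nat.eq_zero_of_zero_dvd (h0 ▸ H.index_map_dvd hf)

theorem IsVirtuallySolvable.exists_normal (hG : IsVirtuallySolvable G) :
    ∃ N : Subgroup G, N.Normal ∧ N.FiniteIndex ∧ Group.IsSolvable N := by
  obtain ⟨H, hH, _⟩ := hG
  exact ⟨H.normalCore, inferInstance, inferInstance,
    Group.isSolvable_of_isSolvable_injective (Subgroup.inclusion_injective H.normalCore_le)⟩

theorem Subgroup.eq_bot_of_normal_of_isSolvable_pi {S : Type*} [Group S] [IsSimpleGroup S]
    (hS : ¬ Group.IsSolvable S) {ι : Type*} (Q : Subgroup (ι → S)) [Q.Normal] [Group.IsSolvable Q] :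
    Q = ⊥ := by
  classical
  refine (Subgroup.eq_bot_iff_forall Q).2 fun x hx => funext fun j => ?_
  have hsurj : Function.Surjective (Pi.evalMonoidHom (fun _ : ι => S) j) :=
    fun s => ⟨Pi.mulSingle j s, by simp⟩
  rcases (‹Q.Normal›.map _ hsurj).eq_bot_or_eq_top with hbot | htop
  · simpa [hbot] using Subgroup.mem_map_of_mem (Pi.evalMonoidHom _ j) hx
  · refine absurd ?_ hS
    refine Group.isSolvable_of_surjective (f := (Pi.evalMonoidHom _ j).comp Q.subtype) fun s => ?_
    obtain ⟨q, hq, rfl⟩ : s ∈ Q.map (Pi.evalMonoidHom _ j) := htop ▸ Subgroup.mem_top s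
    exact ⟨⟨q, hq⟩, rfl⟩

theorem Subgroup.card_le_index_of_injective {P : Type*} [Group P]
    (hP : ∀ Q : Subgroup P, Q.Normal → Group.IsSolvable Q → Q = ⊥) (N : Subgroup G) [N.Normal]
    [N.FiniteIndex] [Group.IsSolvable N] {φ : P →* G} (hφ : Function.Injective φ) :
    Nat.card P ≤ N.index := by
  let χ := (QuotientGroup.mk' N).comp φ
  have hker : χ.ker = N.comap φ := by
    rw [← MonoidHom.comap_ker, QuotientGroup.ker_mk']
  have : Group.IsSolvable (N.comap φ) :=
    Group.isSolvable_of_isSolvable_injective (f := φ.subgroupComap N) fun x y h =>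
      Subtype.ext (hφ (congrArg Subtype.val h))
  have hχ : Function.Injective χ :=
    (MonoidHom.ker_eq_bot_iff χ).1 (hker ▸ hP _ inferInstance this)
  rw [Subgroup.index_eq_card]
  have := Subgroup.finite_quotient_of_finiteIndex (H := N)
  exact Nat.card_le_card_of_injective χ hχ

theorem alternatingGroup.not_isSolvable_fin_five : ¬ Group.IsSolvable (alternatingGroup (Fin 5)) :=
  fun _ => Equiv.Perm.not_isSolvable_fin_5 <|
    Group.isSolvable_of_ker_le_range (alternatingGroup (Fin 5)).subtype sign
      (Subgroup.range_subtype _).ge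

theorem not_isVirtuallySolvable_of_forall_perm_injective
    (h : ∀ (α : Type) [Finite α], ∃ φ : Perm α →* G, Function.Injective φ) :
    ¬ IsVirtuallySolvable G := by
  intro hG
  obtain ⟨N, _, _, _⟩ := hG.exists_normal
  let m := N.index
  obtain ⟨φ, hφ⟩ := h (Σ _ : Fin m, Fin 5)
  let ψ : (Fin m → alternatingGroup (Fin 5)) →* G :=
    φ.comp ((sigmaCongrRightHom _).comp ((alternatingGroup (Fin 5)).subtype.compLeft (Fin m)))
  have hψ : Function.Injective ψ :=
    hφ.comp (sigmaCongrRightHom_injective.comp Subtype.val_injective.comp_left)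
  have hcard : Nat.card (alternatingGroup (Fin 5)) ^ m ≤ m := by
    simpa [Nat.card_fun] using Subgroup.card_le_index_of_injective (fun Q _ _ =>
      Q.eq_bot_of_normal_of_isSolvable_pi alternatingGroup.not_isSolvable_fin_five) N hψ
  have h2 : 2 ^ m ≤ Nat.card (alternatingGroup (Fin 5)) ^ m :=
    Nat.pow_le_pow_left Finite.one_lt_card m
  exact (Nat.lt_two_pow_self.trans_le (h2.trans hcard)).false

end VirtuallySolvable

theorem Equiv.Perm.viaEmbedding_swap {α β : Type*} [DecidableEq α] [DecidableEq β] (ι : α ↪ β)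
    (i j : α) : (swap i j).viaEmbedding ι = swap (ι i) (ι j) := by
  ext z
  by_cases hz : z ∈ Set.range ι
  · obtain ⟨x, rfl⟩ := hz
    rw [viaEmbedding_apply, ι.swap_apply]
  · rw [viaEmbedding_apply_of_notMem _ _ _ hz, swap_apply_of_ne_of_ne] <;>
      rintro rfl <;> exact hz ⟨_, rfl⟩

section DiagViaEmbedding

variable {α β : Type*} (ι : α ⊕ α ↪ β)

noncomputable def Equiv.Perm.diagViaEmbedding : Perm α →* Perm β :=
  (viaEmbeddingHom ι).comp ((sumCongrHom α α).comp ((MonoidHom.id _).prod (MonoidHom.id _)))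

theorem Equiv.Perm.diagViaEmbedding_injective : Function.Injective (diagViaEmbedding ι) :=
  (viaEmbeddingHom_injective ι).comp <| sumCongrHom_injective.comp fun _ _ h => congrArg Prod.fst h

theorem Equiv.Perm.diagViaEmbedding_swap [DecidableEq α] [DecidableEq β] (i j : α) :
    diagViaEmbedding ι (swap i j) =
      swap (ι (.inl i)) (ι (.inl j)) * swap (ι (.inr i)) (ι (.inr j)) := by
  rw [← viaEmbedding_swap, ← viaEmbedding_swap, ← viaEmbeddingHom_apply, ← viaEmbeddingHom_apply,
    ← map_mul, ← sumCongr_swap_one, ← sumCongr_one_swap, sumCongr_mul, mul_one, one_mul]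
  rfl

end DiagViaEmbedding

theorem commutator_swap_mul_swap (A : ℤ) (hA : 3 ≤ A) :
    ⁅swap 0 A * swap 0 2, swap A (A + A) * swap A (A + 2)⁆ * (swap 0 A * swap 0 2) =
      swap 0 2 * swap A (A + 2) := by
  -- the five points involved are distinct, so the identity is transported from `Perm (Fin 5)`
  let ι : Fin 5 ↪ ℤ := ⟨![0, 2, A, A + 2, A + A], by
    intro i j h
    fin_cases i <;> fin_cases j <;> simp at h ⊢ <;> omega⟩
  have key : ⁅(swap 0 2 * swap 0 1 : Perm (Fin 5)), (swap 2 4 * swap 2 3 : Perm (Fin 5))⁆ *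
      (swap 0 2 * swap 0 1) = swap 0 1 * swap 2 3 := by decide
  have := congrArg (viaEmbeddingHom ι) key
  simp only [map_mul, map_commutatorElement, viaEmbeddingHom_apply, viaEmbedding_swap] at this
  exact this

def doubleEvenEmbedding (k : ℕ) {K : ℤ} (hK : 2 * k < K) : Fin (k + 1) ⊕ Fin (k + 1) ↪ ℤ :=
  ⟨Sum.elim (fun i => 2 * i) (fun i => K + 2 * i), by
    rintro (i | i) (j | j) h <;> simp only [Sum.elim_inl, Sum.elim_inr, Sum.inl.injEq,
      Sum.inr.injEq, reduceCtorEq] at h ⊢ <;> omega⟩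

@[simp]
theorem doubleEvenEmbedding_inl (k : ℕ) {K : ℤ} (hK : 2 * k < K) (i : Fin (k + 1)) :
    doubleEvenEmbedding k hK (.inl i) = 2 * i := rfl

@[simp]
theorem doubleEvenEmbedding_inr (k : ℕ) {K : ℤ} (hK : 2 * k < K) (i : Fin (k + 1)) :
    doubleEvenEmbedding k hK (.inr i) = K + 2 * i := rfl

section Translations

variable {R : Subgroup (Perm ℤ)} (h1 : Equiv.addRight 1 ∈ R)
include h1

theorem addRight_mem_of_addRight_one_mem (m : ℤ) : Equiv.addRight m ∈ R := by
  simpa using zpow_mem h1 m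

theorem swap_mul_swap_add_mem {x y z u : ℤ} (h : swap x y * swap z u ∈ R) (m : ℤ) :
    swap (x + m) (y + m) * swap (z + m) (u + m) ∈ R := by
  set t := Equiv.addRight m
  have ht : t ∈ R := addRight_mem_of_addRight_one_mem h1 m
  have hconj := mul_mem (mul_mem ht h) (inv_mem ht)
  rwa [show t * (swap x y * swap z u) * t⁻¹ = (t * swap x y * t⁻¹) * (t * swap z u * t⁻¹) by group,
    ← swap_apply_apply, ← swap_apply_apply] at hconj

variable {A : ℤ} (hA : 3 ≤ A) (hc : swap 0 A * swap 0 2 ∈ R)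
include hA hc

theorem swap_mul_swap_mem_of_threeCycle_mem : swap 0 2 * swap A (A + 2) ∈ R := by
  have hc' := swap_mul_swap_add_mem h1 hc A
  rw [zero_add, add_comm 2 A] at hc'
  rw [← commutator_swap_mul_swap A hA, commutatorElement_def]
  exact mul_mem (mul_mem (mul_mem (mul_mem hc hc') (inv_mem hc)) (inv_mem hc')) hc

theorem swap_mul_swap_mul_mem_of_threeCycle_mem (j : ℕ) :
    swap 0 2 * swap ((j + 1) * A) ((j + 1) * A + 2) ∈ R := by
  induction j with
  | zero => simpa using swap_mul_swap_mem_of_threeCycle_mem h1 hA hc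
  | succ j ih =>
    have hshift := swap_mul_swap_add_mem h1 (swap_mul_swap_mem_of_threeCycle_mem h1 hA hc)
      ((j + 1) * A)
    rw [zero_add, add_comm 2, show A + (j + 1) * A = (↑(j + 1) + 1) * A by push_cast; ring,
      show A + 2 + (j + 1) * A = (↑(j + 1) + 1) * A + 2 by push_cast; ring] at hshift
    simpa only [mul_assoc, swap_mul_self_mul] using mul_mem ih hshift

theorem exists_injective_perm_fin_forall_mem_of_threeCycle_mem (k : ℕ) :
    ∃ φ : Perm (Fin (k + 1)) →* Perm ℤ, Function.Injective φ ∧ ∀ σ, φ σ ∈ R := by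
  have hK : 2 * (k : ℤ) < (k + 1) * A := by nlinarith
  let φ := diagViaEmbedding (doubleEvenEmbedding k hK)
  refine ⟨φ, diagViaEmbedding_injective _, fun σ => ?_⟩
  suffices (⊤ : Submonoid (Perm (Fin (k + 1)))) ≤ (R.comap φ).toSubmonoid from this trivial
  rw [← mclosure_swap_castSucc_succ, Submonoid.closure_le]
  rintro _ ⟨i, rfl⟩
  have := swap_mul_swap_add_mem h1 (swap_mul_swap_mul_mem_of_threeCycle_mem h1 hA hc k) (2 * i)
  simp only [SetLike.mem_coe, Subgroup.coe_toSubmonoid, Subgroup.mem_comap, φ,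
    diagViaEmbedding_swap]
  convert this using 3 <;>
    simp only [doubleEvenEmbedding_inl, doubleEvenEmbedding_inr, Fin.val_castSucc, Fin.val_succ,
      Nat.cast_add, Nat.cast_one] <;> ring

theorem exists_injective_perm_of_threeCycle_mem (α : Type) [Finite α] :
    ∃ φ : Perm α →* R, Function.Injective φ := by
  obtain ⟨φ, hφ, hR⟩ :=
    exists_injective_perm_fin_forall_mem_of_threeCycle_mem h1 hA hc (Nat.card α)
  let ι : α ↪ Fin (Nat.card α + 1) := (Finite.equivFin α).toEmbedding.trans Fin.castSuccEmb
  have hφR : Function.Injective (φ.codRestrict R hR) := fun _ _ h => hφ (congrArg Subtype.val h)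
  exact ⟨(φ.codRestrict R hR).comp (viaEmbeddingHom ι), hφR.comp (viaEmbeddingHom_injective ι)⟩

end Translations

def reflectIcc (m : ℤ) : Perm ℤ :=
  Function.Involutive.toPerm (fun z => if 0 ≤ z ∧ z ≤ m then m - z else z) fun z => by
    dsimp only; split_ifs <;> omega

theorem reflectIcc_apply (m z : ℤ) : reflectIcc m z = if 0 ≤ z ∧ z ≤ m then m - z else z := rfl

theorem reflectIcc_inv (m : ℤ) : (reflectIcc m)⁻¹ = reflectIcc m := rfl

section
variable {n : ℕ}

theorem commutator_addRight_reflectIcc_apply (hn : 1 ≤ n) (z : ℤ) :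
    ⁅Equiv.addRight (1 : ℤ), reflectIcc (2 * n - 2)⁆ z =
      if 0 ≤ z ∧ z ≤ 2 * n - 3 then z + 2
      else if z = 2 * n - 2 then 0
      else if z = 2 * n - 1 then 1 else z := by
  simp only [commutatorElement_def, reflectIcc_inv, Perm.mul_apply, reflectIcc_apply,
    Equiv.neg_addRight, coe_addRight]
  split_ifs <;> omega

theorem commutator_addRight_reflectIcc_pow_apply (hn : 1 ≤ n) {j : ℕ} (hj : j ≤ n) {z : ℤ}
    (hz : 0 ≤ z ∧ z ≤ 2 * n - 1) :
    (⁅Equiv.addRight (1 : ℤ), reflectIcc (2 * n - 2)⁆ ^ j) z =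
      if z + 2 * j ≤ 2 * n - 1 then z + 2 * j else z + 2 * j - 2 * n := by
  induction j with
  | zero =>
    simp only [pow_zero, Perm.coe_one, id_eq, Nat.cast_zero, mul_zero, add_zero, if_pos hz.2]
  | succ j ih =>
    rw [pow_succ', Perm.mul_apply, ih (by omega), commutator_addRight_reflectIcc_apply hn]
    push_cast
    split_ifs <;> omega

theorem commutator_addRight_reflectIcc_pow :
    ⁅Equiv.addRight (1 : ℤ), reflectIcc (2 * n - 2)⁆ ^ n = 1 := by
  rcases Nat.eq_zero_or_pos n with rfl | hn
  · exact pow_zero _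
  ext z
  by_cases hz : 0 ≤ z ∧ z ≤ 2 * n - 1
  · rw [commutator_addRight_reflectIcc_pow_apply hn le_rfl hz]
    simp only [Perm.coe_one, id_eq]
    split_ifs <;> omega
  · refine pow_apply_eq_self_of_apply_eq_self ?_ n
    rw [commutator_addRight_reflectIcc_apply hn]
    split_ifs <;> omega

theorem commutator_commutator_addRight_reflectIcc (hn : 2 ≤ n) :
    ⁅⁅Equiv.addRight (1 : ℤ), reflectIcc (2 * n - 2)⁆, Equiv.addRight (1 : ℤ)⁆ =
      swap 0 (2 * n : ℤ) * swap 0 2 := by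
  rw [commutatorElement_def, mul_inv_eq_iff_eq_mul, mul_inv_eq_iff_eq_mul]
  ext z
  simp only [Perm.mul_apply, coe_addRight, commutator_addRight_reflectIcc_apply (by omega : 1 ≤ n),
    swap_apply_def]
  split_ifs <;> omega

end

def gammaToPerm (n : ℕ) : GammaGroup n →* Perm ℤ :=
  PresentedGroup.toGroup (f := fun g => cond g (Equiv.addRight 1) (reflectIcc (2 * n - 2))) <| by
    rintro _ rfl
    simpa [map_commutatorElement] using commutator_addRight_reflectIcc_pow

theorem addRight_one_mem_range_gammaToPerm (n : ℕ) :
    Equiv.addRight (1 : ℤ) ∈ (gammaToPerm n).range :=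
  ⟨PresentedGroup.of true, PresentedGroup.toGroup.of _⟩

theorem threeCycle_mem_range_gammaToPerm {n : ℕ} (hn : 2 ≤ n) :
    swap 0 (2 * n : ℤ) * swap 0 2 ∈ (gammaToPerm n).range := by
  let a : GammaGroup n := PresentedGroup.of true
  let b : GammaGroup n := PresentedGroup.of false
  refine ⟨⁅⁅a, b⁆, a⁆, ?_⟩
  simpa [a, b, gammaToPerm, map_commutatorElement] using
    commutator_commutator_addRight_reflectIcc hn

/-- For every `n ≥ 2`, the group `Γₙ = ⟨a, b | [a, b]ⁿ = 1⟩` is not virtually solvable: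
no finite-index subgroup of `Γₙ` is solvable. -/
theorem gammaGroup_not_virtually_solvable (n : ℕ) (hn : 2 ≤ n) :
    ¬ ∃ H : Subgroup (GammaGroup n), H.FiniteIndex ∧ IsSolvable H := fun hΓ =>
  not_isVirtuallySolvable_of_forall_perm_injective
    (exists_injective_perm_of_threeCycle_mem (addRight_one_mem_range_gammaToPerm n)
      (by omega) (threeCycle_mem_range_gammaToPerm hn))
    (IsVirtuallySolvable.of_surjective (gammaToPerm n).rangeRestrict_surjective hΓ)
end

section
/- Let f, g : ℝ → ℝ be the affine maps f(x) = 2x + 3 and g(x) = 3x + 4. Then for every nonzero integer n, each of the maps fⁿ ∘ g, fⁿ ∘ g⁻¹, gⁿ ∘ f, and gⁿ ∘ f⁻¹ has a fixed point in ℝ, but the commutator f ∘ g ∘ f⁻¹ ∘ g⁻¹ is the translation x ↦ x − 2 and hence has no fixed point in ℝ. -/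
/-!
Each of `fⁿ ∘ g`, `fⁿ ∘ g⁻¹`, `gⁿ ∘ f`, `gⁿ ∘ f⁻¹` is affine with slope `2ⁿ · 3^(±1)` or
`3ⁿ · 2^(±1)`, and an affine map of slope `≠ 1` has a fixed point. These slopes are never `1`
because no integer power of `2` equals `3` and vice versa: for `n ≤ 0` the power is at most `1`,
and for `n > 0` it is divisible by the base. The commutator of two affine maps has slope `1`, so it
is a translation; here the translation is by `(2 - 1) · 4 - (3 - 1) · 3 = -2`.
-/

open Equiv

section Slope

variable {K : Type*} [Field K] [LinearOrder K] [IsStrictOrderedRing K]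

theorem natCast_zpow_ne_natCast {p q : ℕ} (hp : 1 < p) (hq : 1 < q) (hpq : p.Coprime q)
    (n : ℤ) : (p : K) ^ n ≠ q := by
  rcases le_or_gt n 0 with hn | hn
  · have hle : (p : K) ^ n ≤ 1 := zpow_le_one_of_nonpos₀ (by exact_mod_cast hp.le) hn
    have hlt : (1 : K) < q := by exact_mod_cast hq
    exact (hle.trans_lt hlt).ne
  · lift n to ℕ using hn.le
    intro h
    have hpow : p ^ n = q := by exact_mod_cast h
    have hdvd : p ∣ q := hpow ▸ dvd_pow_self p (by omega)
    exact hp.ne' (hpq.eq_one_of_dvd hdvd)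

theorem natCast_zpow_mul_natCast_ne_one {p q : ℕ} (hp : 1 < p) (hq : 1 < q)
    (hpq : p.Coprime q) (n : ℤ) : (p : K) ^ n * q ≠ 1 := fun h =>
  natCast_zpow_ne_natCast (K := K) hp hq hpq (-n) <| by rw [zpow_neg, eq_inv_of_mul_eq_one_right h]

theorem natCast_zpow_mul_natCast_inv_ne_one {p q : ℕ} (hp : 1 < p) (hq : 1 < q)
    (hpq : p.Coprime q) (n : ℤ) : (p : K) ^ n * (q : K)⁻¹ ≠ 1 := by
  rw [Ne, mul_inv_eq_one₀ (by positivity)]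
  exact natCast_zpow_ne_natCast hp hq hpq n

end Slope

section Affine

variable {K : Type*} [Field K]

def IsAffineWithSlope (f : K → K) (a : K) : Prop := ∃ b, ∀ x, f x = a * x + b

namespace IsAffineWithSlope

theorem exists_fixed_point {f : K → K} {a : K} (hf : IsAffineWithSlope f a) (ha : a ≠ 1) :
    ∃ x, f x = x := by
  obtain ⟨b, hb⟩ := hf
  have h : 1 - a ≠ 0 := sub_ne_zero.mpr ha.symm
  exact ⟨b / (1 - a), by rw [hb]; field_simp; ring⟩

theorem slope_ne_zero {f : K → K} {a : K} (hf : IsAffineWithSlope f a)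
    (hinj : Function.Injective f) : a ≠ 0 := by
  obtain ⟨b, hb⟩ := hf
  rintro rfl
  exact zero_ne_one (hinj (by rw [hb, hb, zero_mul, zero_mul]))

theorem perm_mul {f g : Perm K} {a c : K} (hf : IsAffineWithSlope f a)
    (hg : IsAffineWithSlope g c) : IsAffineWithSlope ⇑(f * g) (a * c) := by
  obtain ⟨b, hb⟩ := hf
  obtain ⟨d, hd⟩ := hg
  exact ⟨a * d + b, fun x => by rw [Perm.mul_apply, hd, hb]; ring⟩

theorem perm_pow {f : Perm K} {a : K} (hf : IsAffineWithSlope f a) (n : ℕ) :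
    IsAffineWithSlope ⇑(f ^ n) (a ^ n) := by
  induction n with
  | zero => exact ⟨0, fun x => by simp⟩
  | succ n ih => simpa only [pow_succ] using ih.perm_mul hf

theorem perm_inv {f : Perm K} {a : K} (hf : IsAffineWithSlope f a) :
    IsAffineWithSlope ⇑f⁻¹ a⁻¹ := by
  have ha := hf.slope_ne_zero f.injective
  obtain ⟨b, hb⟩ := hf
  exact ⟨-(a⁻¹ * b), fun x => by rw [Perm.inv_eq_iff_eq, hb]; field_simp; ring⟩

theorem perm_zpow {f : Perm K} {a : K} (hf : IsAffineWithSlope f a) (n : ℤ) :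
    IsAffineWithSlope ⇑(f ^ n) (a ^ n) := by
  cases n with
  | ofNat n => simpa only [Int.ofNat_eq_natCast, zpow_natCast] using hf.perm_pow n
  | negSucc n => simpa only [zpow_negSucc] using (hf.perm_pow (n + 1)).perm_inv

end IsAffineWithSlope

theorem Equiv.Perm.commutator_apply_of_affine {f g : Perm K} {a b c d : K}
    (hf : ∀ x, f x = a * x + b) (hg : ∀ x, g x = c * x + d) (x : K) :
    (f * g * f⁻¹ * g⁻¹) x = x + ((a - 1) * d - (c - 1) * b) := by
  have ha : a ≠ 0 := IsAffineWithSlope.slope_ne_zero ⟨b, hf⟩ f.injective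
  have hc : c ≠ 0 := IsAffineWithSlope.slope_ne_zero ⟨d, hg⟩ g.injective
  have hf_inv : ∀ y, f⁻¹ y = (y - b) / a := fun y => by
    rw [Perm.inv_eq_iff_eq, hf]; field_simp; ring
  have hg_inv : ∀ y, g⁻¹ y = (y - d) / c := fun y => by
    rw [Perm.inv_eq_iff_eq, hg]; field_simp; ring
  simp only [Perm.mul_apply, hg_inv, hf_inv, hg, hf]
  field_simp
  ring

end Affine

/-- For the affine maps `f(x) = 2x + 3` and `g(x) = 3x + 4`: every first-step primitive
element `fⁿ ∘ g`, `fⁿ ∘ g⁻¹`, `gⁿ ∘ f`, `gⁿ ∘ f⁻¹` (for nonzero integers `n`) has a fixed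
point in `ℝ`, but the commutator `f ∘ g ∘ f⁻¹ ∘ g⁻¹` is the translation `x ↦ x − 2` and hence
has no fixed point in `ℝ`. -/
theorem affine_example_fixed_points (f g : Equiv.Perm ℝ)
    (hf : ∀ x, f x = 2 * x + 3) (hg : ∀ x, g x = 3 * x + 4) :
    (∀ n : ℤ, n ≠ 0 →
      (∃ x : ℝ, (f ^ n * g) x = x) ∧ (∃ x : ℝ, (f ^ n * g⁻¹) x = x) ∧
      (∃ x : ℝ, (g ^ n * f) x = x) ∧ (∃ x : ℝ, (g ^ n * f⁻¹) x = x)) ∧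
    (∀ x : ℝ, (f * g * f⁻¹ * g⁻¹) x = x - 2) ∧
    (∀ x : ℝ, (f * g * f⁻¹ * g⁻¹) x ≠ x) := by
  have hf' : IsAffineWithSlope f (2 : ℕ) := ⟨3, by exact_mod_cast hf⟩
  have hg' : IsAffineWithSlope g (3 : ℕ) := ⟨4, by exact_mod_cast hg⟩
  have h23 : Nat.Coprime 2 3 := by norm_num
  have hcomm (x : ℝ) : (f * g * f⁻¹ * g⁻¹) x = x - 2 := by
    rw [Perm.commutator_apply_of_affine hf hg]; ring
  refine ⟨fun n _ => ⟨?_, ?_, ?_, ?_⟩, hcomm, fun x hx => by linarith [hcomm x]⟩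
  · exact ((hf'.perm_zpow n).perm_mul hg').exists_fixed_point
      (natCast_zpow_mul_natCast_ne_one (by norm_num) (by norm_num) h23 n)
  · exact ((hf'.perm_zpow n).perm_mul hg'.perm_inv).exists_fixed_point
      (natCast_zpow_mul_natCast_inv_ne_one (by norm_num) (by norm_num) h23 n)
  · exact ((hg'.perm_zpow n).perm_mul hf').exists_fixed_point
      (natCast_zpow_mul_natCast_ne_one (by norm_num) (by norm_num) h23.symm n)
  · exact ((hg'.perm_zpow n).perm_mul hf'.perm_inv).exists_fixed_point
      (natCast_zpow_mul_natCast_inv_ne_one (by norm_num) (by norm_num) h23.symm n)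
end

section
/- Let θ, η ∈ ℝ and λ ∈ ℝ with λ ≠ 0. Let A = [[cos θ, sin θ], [−sin θ, cos θ]], D = [[λ, 0], [0, λ⁻¹]], R = [[cos η, sin η], [−sin η, cos η]], and B' = D · R · D⁻¹, all 2×2 real matrices. Then for all integers n and k, trace(Aⁿ · B'ᵏ) = 2·cos(nθ)·cos(kη) − (λ² + λ⁻²)·sin(nθ)·sin(kη) = 2·cos(nθ − kη) − (λ + λ⁻¹)²·sin(nθ)·sin(kη). -/
/-! Rotations form a one-parameter group, so `Aⁿ` and `Rᵏ` are the rotations by `nθ` and `kη`,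
and `B'ᵏ = D Rᵏ D⁻¹` is `Rᵏ` with its off-diagonal entries scaled by `λ²` and `λ⁻²`.
The trace of the product is then a direct computation. -/

open Real Matrix

noncomputable def rotationMatrix (θ : ℝ) : Matrix (Fin 2) (Fin 2) ℝ :=
  !![cos θ, sin θ; -sin θ, cos θ]

theorem rotationMatrix_zero : rotationMatrix 0 = 1 := by
  simp [rotationMatrix, one_fin_two]

theorem rotationMatrix_add (a b : ℝ) :
    rotationMatrix (a + b) = rotationMatrix a * rotationMatrix b := by
  simp only [rotationMatrix, mul_fin_two, cos_add, sin_add]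
  ext i j
  fin_cases i <;> fin_cases j <;> simp <;> ring

noncomputable def rotationHom : Multiplicative ℝ →* GL (Fin 2) ℝ :=
  MonoidHom.toHomUnits
    { toFun := fun θ => rotationMatrix θ.toAdd
      map_one' := rotationMatrix_zero
      map_mul' := fun a b => rotationMatrix_add a.toAdd b.toAdd }

theorem val_zpow_of_val_eq_rotationMatrix {A : GL (Fin 2) ℝ} {θ : ℝ}
    (hA : (A : Matrix (Fin 2) (Fin 2) ℝ) = rotationMatrix θ) (n : ℤ) :
    ((A ^ n : GL (Fin 2) ℝ) : Matrix (Fin 2) (Fin 2) ℝ) = rotationMatrix (n * θ) := by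
  obtain rfl : A = rotationHom (.ofAdd θ) := Units.ext hA
  rw [← map_zpow, ← ofAdd_zsmul, zsmul_eq_mul]
  rfl

theorem inv_diag_fin_two_inv_self {K : Type*} [Field K] {l : K} (hl : l ≠ 0) :
    (!![l, 0; 0, l⁻¹] : Matrix (Fin 2) (Fin 2) K)⁻¹ = !![l⁻¹, 0; 0, l] := by
  refine inv_eq_left_inv ?_
  simp [one_fin_two, hl]

theorem trace_rotationMatrix_mul_diag_conj (a b : ℝ) {l : ℝ} (hl : l ≠ 0) :
    trace (rotationMatrix a * (!![l, 0; 0, l⁻¹] * rotationMatrix b * !![l⁻¹, 0; 0, l])) =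
      2 * cos a * cos b - (l ^ 2 + l⁻¹ ^ 2) * sin a * sin b := by
  rw [rotationMatrix, rotationMatrix, mul_fin_two, mul_fin_two, mul_fin_two, trace_fin_two]
  simp only [of_apply, cons_val', cons_val_zero, cons_val_one, cons_val_fin_one]
  linear_combination 2 * cos a * cos b * mul_inv_cancel₀ hl

/-- For `A` the rotation matrix of angle `θ`, `D = diag(λ, λ⁻¹)`, `R` the rotation matrix of
angle `η` and `B' = D·R·D⁻¹`, one has for all integers `n`, `k`:
`trace(Aⁿ·B'ᵏ) = 2·cos(nθ)·cos(kη) − (λ² + λ⁻²)·sin(nθ)·sin(kη)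
             = 2·cos(nθ − kη) − (λ + λ⁻¹)²·sin(nθ)·sin(kη)`. -/
theorem trace_rotation_conj_pow (θ η l : ℝ) (hl : l ≠ 0)
    (A D R : GL (Fin 2) ℝ)
    (hA : (A : Matrix (Fin 2) (Fin 2) ℝ) = !![cos θ, sin θ; -sin θ, cos θ])
    (hD : (D : Matrix (Fin 2) (Fin 2) ℝ) = !![l, 0; 0, l⁻¹])
    (hR : (R : Matrix (Fin 2) (Fin 2) ℝ) = !![cos η, sin η; -sin η, cos η]) :
    ∀ n k : ℤ,
      Matrix.trace ((A ^ n * (D * R * D⁻¹) ^ k : GL (Fin 2) ℝ) : Matrix (Fin 2) (Fin 2) ℝ)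
          = 2 * cos (n * θ) * cos (k * η) - (l ^ 2 + l⁻¹ ^ 2) * sin (n * θ) * sin (k * η) ∧
      Matrix.trace ((A ^ n * (D * R * D⁻¹) ^ k : GL (Fin 2) ℝ) : Matrix (Fin 2) (Fin 2) ℝ)
          = 2 * cos (n * θ - k * η) - (l + l⁻¹) ^ 2 * sin (n * θ) * sin (k * η) := by
  intro n k
  have hDinv : ((D⁻¹ : GL (Fin 2) ℝ) : Matrix (Fin 2) (Fin 2) ℝ) = !![l⁻¹, 0; 0, l] := by
    rw [coe_units_inv, hD, inv_diag_fin_two_inv_self hl]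
  have htrace : trace ((A ^ n * (D * R * D⁻¹) ^ k : GL (Fin 2) ℝ) : Matrix (Fin 2) (Fin 2) ℝ)
      = 2 * cos (n * θ) * cos (k * η) - (l ^ 2 + l⁻¹ ^ 2) * sin (n * θ) * sin (k * η) := by
    rw [conj_zpow, Units.val_mul, Units.val_mul, Units.val_mul,
      val_zpow_of_val_eq_rotationMatrix hA, val_zpow_of_val_eq_rotationMatrix hR, hD, hDinv]
    exact trace_rotationMatrix_mul_diag_conj _ _ hl
  refine ⟨htrace, htrace.trans ?_⟩
  rw [cos_sub]
  linear_combination 2 * sin (n * θ) * sin (k * η) * mul_inv_cancel₀ hl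
end

section
/- Let θ, η ∈ ℝ with θ/π irrational and sin η ≠ 0, and let c > 4. Then there exists an integer n such that 2·cos(nθ − η) − c·sin(nθ)·sin(η) < −2. -/
/-!
Write `2 cos(x − η) − c sin x sin η = A cos x + B sin x` with `A = 2 cos η`, `B = (2 − c) sin η`.
This function attains its minimum `−√(A² + B²)`, which lies below `−2` once `c > 4` and
`sin η ≠ 0`, so it is `< −2` on an open set. Since `θ/π` is irrational, the multiples `nθ`
are dense modulo `2π`, and by `2π`-periodicity one of them lands in that set.
-/

open Real

theorem exists_mul_cos_add_mul_sin_eq_neg_sqrt (A B : ℝ) :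
    ∃ x : ℝ, A * cos x + B * sin x = -√(A ^ 2 + B ^ 2) := by
  set z : ℂ := ⟨-A, -B⟩
  have hnorm : ‖z‖ = √(A ^ 2 + B ^ 2) := by
    rw [Complex.norm_def, Complex.normSq_mk]
    ring_nf
  have hre : ‖z‖ * cos z.arg = -A := Complex.norm_mul_cos_arg z
  have him : ‖z‖ * sin z.arg = -B := Complex.norm_mul_sin_arg z
  refine ⟨z.arg, ?_⟩
  rw [← hnorm]
  linear_combination cos z.arg * hre + sin z.arg * him - ‖z‖ * sin_sq_add_cos_sq z.arg

theorem two_lt_sqrt_sq_add_sq_of_four_lt {η c : ℝ} (hη : sin η ≠ 0) (hc : 4 < c) :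
    2 < √((2 * cos η) ^ 2 + ((2 - c) * sin η) ^ 2) := by
  rw [lt_sqrt zero_le_two]
  have hgap : 0 < c * (c - 4) * sin η ^ 2 := by
    have : 0 < c * (c - 4) := by nlinarith
    positivity
  nlinarith [sin_sq_add_cos_sq η]

theorem Function.Periodic.exists_int_mul_lt {f : ℝ → ℝ} {T θ a x₀ : ℝ} (hper : f.Periodic T)
    (hf : Continuous f) (hθ : Irrational (θ / T)) (hx₀ : f x₀ < a) :
    ∃ n : ℤ, f (n * θ) < a := by
  have hopen : IsOpen {x | f x < a} := isOpen_lt hf continuous_const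
  obtain ⟨y, hy, hyS⟩ :=
    (dense_addSubgroupClosure_pair_iff.mpr hθ).inter_open_nonempty _ hopen ⟨x₀, hx₀⟩
  obtain ⟨n, m, rfl⟩ := AddSubgroup.mem_closure_pair.mp hyS
  refine ⟨n, ?_⟩
  simp only [Set.mem_ofPred_eq, zsmul_eq_mul] at hy
  rwa [hper.int_mul m] at hy

/-- If `θ/π` is irrational, `sin η ≠ 0` and `c > 4`, then there is an integer `n` with
`2·cos(nθ − η) − c·sin(nθ)·sin(η) < −2`. -/
theorem exists_int_trace_lt_neg_two (θ η c : ℝ)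
    (hθ : Irrational (θ / π)) (hη : sin η ≠ 0) (hc : 4 < c) :
    ∃ n : ℤ, 2 * cos (n * θ - η) - c * sin (n * θ) * sin η < -2 := by
  set A := 2 * cos η
  set B := (2 - c) * sin η
  have hper : Function.Periodic (fun x => A * cos x + B * sin x) (2 * π) := fun x => by
    simp only [cos_add_two_pi, sin_add_two_pi]
  have hθ' : Irrational (θ / (2 * π)) := by
    simpa [div_div, mul_comm] using hθ.div_natCast two_ne_zero
  obtain ⟨x₀, hx₀⟩ := exists_mul_cos_add_mul_sin_eq_neg_sqrt A B
  have hmin : A * cos x₀ + B * sin x₀ < -2 := by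
    linarith [two_lt_sqrt_sq_add_sq_of_four_lt hη hc]
  obtain ⟨n, hn⟩ := hper.exists_int_mul_lt (by fun_prop) hθ' hmin
  refine ⟨n, ?_⟩
  calc 2 * cos (n * θ - η) - c * sin (n * θ) * sin η = A * cos (n * θ) + B * sin (n * θ) := by
        rw [cos_sub]; ring
    _ < -2 := hn
end

section
/- Let G be a subgroup of SL(2, ℝ) that is not abelian (there exist A, B ∈ G with AB ≠ BA). Then G contains an element that acts freely on the upper half-plane: there exists g ∈ G such that g · z ≠ z for every z ∈ ℍ. -/
/-!
If `A ∈ G` fixes a point of `ℍ`, the fixed-point equations force `A` to be either scalar or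
elliptic (`tr² < 4`). A scalar `A` commutes with everything, so `A` is elliptic. For elliptic `A`
and any `B` not commuting with it, `tr ⁅A, B⁆ = 2 - det (AB - BA) > 2`, so the commutator is
hyperbolic, and hyperbolic elements have no fixed point in `ℍ`.
-/

open scoped MatrixGroups UpperHalfPlane commutatorElement
open Matrix

namespace Matrix

variable {R : Type*} [CommRing R]

theorem discr_scalar_fin_two (r : R) : (scalar (Fin 2) r).discr = 0 := by
  norm_num [discr_fin_two, mul_pow]

/- On traceless matrices `det` is a quadratic form of signature `(1, 2)`. The commutator
`AB - BA` is orthogonal to the traceless part of `A`, which has positive determinant when `A` is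
elliptic, so `det` is negative definite on its orthogonal complement; `hkey` is this in
coordinates. -/
theorem det_mul_sub_mul_neg_of_isElliptic [LinearOrder R] [IsStrictOrderedRing R]
    {A B : Matrix (Fin 2) (Fin 2) R} (hA : A.IsElliptic) (hAB : A * B ≠ B * A) :
    (A * B - B * A).det < 0 := by
  set M := A * B - B * A with hM
  have hkey : 4 * A 0 1 ^ 2 * -M.det =
      (2 * A 0 1 * M 0 0 - (A 0 0 - A 1 1) * M 0 1) ^ 2 + -A.discr * M 0 1 ^ 2 := by
    simp only [hM, discr_fin_two, det_fin_two, trace_fin_two, sub_apply, mul_apply,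
      Fin.sum_univ_two]
    ring
  have horth : A 0 1 * M 1 0 = -(A 0 0 - A 1 1) * M 0 0 - A 1 0 * M 0 1 := by
    simp only [hM, sub_apply, mul_apply, Fin.sum_univ_two]
    ring
  have htr : M 1 1 = -M 0 0 := by
    simp only [hM, sub_apply, mul_apply, Fin.sum_univ_two]
    ring
  have hb : A 0 1 ≠ 0 := hA.b_ne_zero
  refine lt_of_not_ge fun hdet ↦ hAB (sub_eq_zero.mp ?_)
  have hsum : (2 * A 0 1 * M 0 0 - (A 0 0 - A 1 1) * M 0 1) ^ 2 + -A.discr * M 0 1 ^ 2 ≤ 0 := by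
    rw [← hkey]
    exact mul_nonpos_of_nonneg_of_nonpos (by positivity) (neg_nonpos.mpr hdet)
  have h01 : M 0 1 = 0 := by
    have hsq : -A.discr * M 0 1 ^ 2 = 0 := by
      linarith [sq_nonneg (2 * A 0 1 * M 0 0 - (A 0 0 - A 1 1) * M 0 1),
        mul_nonneg (neg_nonneg.mpr hA.le) (sq_nonneg (M 0 1))]
    simpa [hA.ne] using hsq
  have h00 : M 0 0 = 0 := by
    rw [h01] at hsum
    simpa [hb] using hsum
  have h10 : M 1 0 = 0 := by
    simpa [h00, h01, hb] using horth
  change M = 0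
  ext i j
  fin_cases i <;> fin_cases j <;> simp [h00, h01, h10, htr]

namespace SpecialLinearGroup

/- `det (X - Y) = det X + det Y - tr (X * adjugate Y)` for `2 × 2` matrices, applied to
`X = AB` and `Y = BA`, whose adjugate is `A⁻¹B⁻¹`. -/
theorem trace_commutator (A B : SL(2, R)) :
    (⁅A, B⁆ : SL(2, R)).val.trace = 2 - ((A : Matrix (Fin 2) (Fin 2) R) * B - B * A).det := by
  have hA : A 0 0 * A 1 1 - A 0 1 * A 1 0 = 1 := by rw [← det_fin_two]; exact A.det_coe
  have hB : B 0 0 * B 1 1 - B 0 1 * B 1 0 = 1 := by rw [← det_fin_two]; exact B.det_coe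
  rw [commutatorElement_def]
  simp only [coe_mul, coe_inv, adjugate_fin_two, trace_fin_two, det_fin_two, mul_apply,
    Fin.sum_univ_two, sub_apply, of_apply, cons_val', cons_val_zero, cons_val_one, empty_val',
    cons_val_fin_one]
  linear_combination 2 * (B 0 0 * B 1 1 - B 0 1 * B 1 0) * hA + 2 * hB

theorem isHyperbolic_commutator_of_isElliptic [LinearOrder R] [IsStrictOrderedRing R]
    {A B : SL(2, R)} (hA : (A : Matrix (Fin 2) (Fin 2) R).IsElliptic)
    (hAB : (A : Matrix (Fin 2) (Fin 2) R) * B ≠ B * A) :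
    (⁅A, B⁆ : SL(2, R)).val.IsHyperbolic := by
  have hdet := det_mul_sub_mul_neg_of_isElliptic hA hAB
  rw [IsHyperbolic, discr_fin_two, trace_commutator, det_coe]
  nlinarith

end SpecialLinearGroup

end Matrix

namespace UpperHalfPlane

theorem entries_of_smul_eq_self {g : SL(2, ℝ)} {z : ℍ} (hz : g • z = z) :
    g 0 0 - g 1 1 = 2 * g 1 0 * z.re ∧ g 0 1 = -g 1 0 * (z.re ^ 2 + z.im ^ 2) := by
  have hmob : ((g 0 0 : ℂ) * z + g 0 1) / ((g 1 0 : ℂ) * z + g 1 1) = z := by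
    simpa [coe_specialLinearGroup_apply] using congrArg (fun w : ℍ ↦ (w : ℂ)) hz
  have hden : (g 1 0 : ℂ) * z + g 1 1 ≠ 0 := by
    intro h0
    rw [h0, div_zero] at hmob
    exact z.ne_zero hmob.symm
  rw [div_eq_iff hden] at hmob
  have hre := congrArg Complex.re hmob
  have him := congrArg Complex.im hmob
  simp only [Complex.add_re, Complex.add_im, Complex.mul_re, Complex.mul_im, Complex.ofReal_re,
    Complex.ofReal_im, coe_re, coe_im] at hre him
  have hdiag : g 0 0 - g 1 1 = 2 * g 1 0 * z.re :=
    mul_right_cancel₀ z.im_ne_zero (by linear_combination him)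
  exact ⟨hdiag, by linear_combination hre - z.re * hdiag⟩

theorem isElliptic_or_mem_range_scalar_of_smul_eq_self {g : SL(2, ℝ)} {z : ℍ} (hz : g • z = z) :
    (g : Matrix (Fin 2) (Fin 2) ℝ).IsElliptic ∨
      (g : Matrix (Fin 2) (Fin 2) ℝ) ∈ Set.range (scalar _) := by
  obtain ⟨hdiag, hoff⟩ := entries_of_smul_eq_self hz
  by_cases hc : g 1 0 = 0
  · right
    have hb : g 0 1 = 0 := by simp [hoff, hc]
    have hd : g 1 1 = g 0 0 := by linear_combination -hdiag - 2 * z.re * hc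
    refine ⟨g 0 0, ?_⟩
    ext i j
    fin_cases i <;> fin_cases j <;> simp [hc, hb, hd]
  · left
    have hdiscr : (g : Matrix (Fin 2) (Fin 2) ℝ).discr = -4 * (g 1 0 * z.im) ^ 2 := by
      rw [discr_fin_two, trace_fin_two, det_fin_two]
      linear_combination (g 0 0 - g 1 1 + 2 * g 1 0 * z.re) * hdiag + 4 * g 1 0 * hoff
    rw [IsElliptic, hdiscr]
    have : 0 < (g 1 0 * z.im) ^ 2 := by positivity
    linarith

theorem smul_ne_self_of_isHyperbolic {g : SL(2, ℝ)}
    (hg : (g : Matrix (Fin 2) (Fin 2) ℝ).IsHyperbolic) (z : ℍ) : g • z ≠ z := by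
  intro hz
  rcases isElliptic_or_mem_range_scalar_of_smul_eq_self hz with hell | ⟨r, hr⟩
  · exact lt_asymm hg hell
  · rw [← hr] at hg
    exact hg.ne' (discr_scalar_fin_two r)

end UpperHalfPlane

/-- In a non-abelian subgroup `G` of `SL(2, ℝ)`, there always exists an element acting freely
on the upper half-plane `ℍ` under the Möbius action. -/
theorem exists_freely_acting_of_not_abelian (G : Subgroup SL(2, ℝ))
    (h : ∃ A ∈ G, ∃ B ∈ G, A * B ≠ B * A) :
    ∃ g ∈ G, ∀ z : ℍ, g • z ≠ z := by
  obtain ⟨A, hA, B, hB, hAB⟩ := h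
  by_cases hfree : ∀ z : ℍ, A • z ≠ z
  · exact ⟨A, hA, hfree⟩
  obtain ⟨z, hz⟩ := not_forall_not.mp hfree
  have hAB' : (A : Matrix (Fin 2) (Fin 2) ℝ) * B ≠ B * A := fun hmat ↦ hAB (Subtype.ext hmat)
  have hell : (A : Matrix (Fin 2) (Fin 2) ℝ).IsElliptic := by
    refine (UpperHalfPlane.isElliptic_or_mem_range_scalar_of_smul_eq_self hz).resolve_right ?_
    rintro ⟨r, hr⟩
    exact hAB' (hr ▸ scalar_commute r (Commute.all r) _)
  exact ⟨⁅A, B⁆, G.commutator_le_self (Subgroup.commutator_mem_commutator hA hB),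
    UpperHalfPlane.smul_ne_self_of_isHyperbolic
      (SpecialLinearGroup.isHyperbolic_commutator_of_isElliptic hell hAB')⟩
end

section
/- Let A = [[13/100, 19/20], [0, 19/10]] and B = [[3/20, 0], [−3/50, 19/10]], regarded as invertible 2×2 real matrices. Then for every integer m, each of the matrices Aᵐ·B, Aᵐ·B⁻¹, Bᵐ·A, and Bᵐ·A⁻¹ satisfies trace² ≥ 4·det (hence has a real eigenvector, i.e., fixes a point of ℝP¹), while the commutator B⁻¹·A⁻¹·B·A satisfies trace(B⁻¹A⁻¹BA)² < 4·det(B⁻¹A⁻¹BA) = 4 (hence has no real eigenvector and fixes no point of ℝP¹). -/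
open Matrix

/-!
`A` is upper and `B` lower triangular with distinct diagonal entries, so their integer powers
have closed forms, and in the eigenbasis of `A` the discriminant `trace² - 4 det` of `Aᵐ N` is a
square plus `4 (a d)ᵐ (p q - det N)`, where `a, d` are the eigenvalues of `A` and `p, q` the
diagonal entries of `N` in that basis. For `N = B` and `N = B⁻¹` one checks `det N ≤ p q`, which
settles all `m` at once; symmetrically for `Bᵐ A^{±1}`. The commutator has determinant `1` and
trace `-1141/2470`, so its discriminant is negative.
-/

theorem Units.val_zpow_eq_of_forall_add_one {M : Type*} [Monoid M] (u : Mˣ) {g : ℤ → M}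
    (h₀ : g 0 = 1) (h_succ : ∀ k, g (k + 1) = g k * u) (k : ℤ) : ((u ^ k : Mˣ) : M) = g k := by
  induction k using Int.induction_on with
  | zero => simp [h₀]
  | succ n ih => rw [_root_.zpow_add_one, Units.val_mul, ih, h_succ]
  | pred n ih =>
    rw [← Units.mul_left_inj u, ← Units.val_mul, ← _root_.zpow_add_one, sub_add_cancel, ih,
      ← h_succ, sub_add_cancel]

namespace Matrix.GeneralLinearGroup

open scoped commutatorElement in
theorem det_val_commutatorElement {n R : Type*} [Fintype n]
    [DecidableEq n] [CommRing R] (g h : GL n R) :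
    ((⁅g, h⁆ : GL n R) : Matrix n n R).det = 1 := by
  rw [← val_det_apply, map_commutatorElement,
    commutatorElement_eq_one_iff_mul_comm.mpr (mul_comm _ _), Units.val_one]

variable {K : Type*} [Field K]

theorem val_zpow_of_val_eq_upper {U : GL (Fin 2) K} {a b d : K}
    (hU : (U : Matrix (Fin 2) (Fin 2) K) = !![a, b; 0, d]) (had : a ≠ d) (m : ℤ) :
    ((U ^ m : GL (Fin 2) K) : Matrix (Fin 2) (Fin 2) K) =
      !![a ^ m, b / (d - a) * (d ^ m - a ^ m); 0, d ^ m] := by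
  have hdet := isUnits_det_units U
  rw [hU, det_fin_two_of, mul_zero, sub_zero, isUnit_iff_ne_zero, mul_ne_zero_iff] at hdet
  refine Units.val_zpow_eq_of_forall_add_one U
    (g := fun k ↦ !![a ^ k, b / (d - a) * (d ^ k - a ^ k); 0, d ^ k])
    (by simp [one_fin_two]) (fun k ↦ ?_) m
  rw [hU, mul_fin_two, zpow_add_one₀ hdet.1, zpow_add_one₀ hdet.2]
  simp only [mul_zero, add_zero, zero_mul, zero_add]
  congr
  field_simp
  ring

theorem val_zpow_of_val_eq_lower {U : GL (Fin 2) K} {a c d : K}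
    (hU : (U : Matrix (Fin 2) (Fin 2) K) = !![a, 0; c, d]) (had : a ≠ d) (m : ℤ) :
    ((U ^ m : GL (Fin 2) K) : Matrix (Fin 2) (Fin 2) K) =
      !![a ^ m, 0; c / (d - a) * (d ^ m - a ^ m), d ^ m] := by
  have hdet := isUnits_det_units U
  rw [hU, det_fin_two_of, zero_mul, sub_zero, isUnit_iff_ne_zero, mul_ne_zero_iff] at hdet
  refine Units.val_zpow_eq_of_forall_add_one U
    (g := fun k ↦ !![a ^ k, 0; c / (d - a) * (d ^ k - a ^ k), d ^ k])
    (by simp [one_fin_two]) (fun k ↦ ?_) m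
  rw [hU, mul_fin_two, zpow_add_one₀ hdet.1, zpow_add_one₀ hdet.2]
  simp only [mul_zero, add_zero, zero_mul, zero_add]
  congr
  field_simp
  ring

variable [LinearOrder K] [IsStrictOrderedRing K]

/- With `s = b / (d - a)`, the two factors in `hN` are the diagonal entries of `N` in the
eigenbasis `(1, 0), (s, 1)` of `U`. -/
theorem four_mul_det_le_trace_sq_zpow_mul_of_upper {U : GL (Fin 2) K} {a b d : K}
    (hU : (U : Matrix (Fin 2) (Fin 2) K) = !![a, b; 0, d]) (had : a ≠ d) (had_pos : 0 < a * d)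
    {N : Matrix (Fin 2) (Fin 2) K}
    (hN : N.det ≤ (N 0 0 - b / (d - a) * N 1 0) * (N 1 1 + b / (d - a) * N 1 0)) (m : ℤ) :
    4 * ((U ^ m).val * N).det ≤ ((U ^ m).val * N).trace ^ 2 := by
  have hpow : 0 < a ^ m * d ^ m := mul_zpow a d m ▸ zpow_pos had_pos m
  rw [val_zpow_of_val_eq_upper hU had, eta_fin_two N, mul_fin_two, det_fin_two_of,
    trace_fin_two_of]
  rw [det_fin_two] at hN
  set s := b / (d - a)
  nlinarith [sq_nonneg (a ^ m * (N 0 0 - s * N 1 0) - d ^ m * (N 1 1 + s * N 1 0)),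
    mul_le_mul_of_nonneg_left hN hpow.le]

theorem four_mul_det_le_trace_sq_zpow_mul_of_lower {U : GL (Fin 2) K} {a c d : K}
    (hU : (U : Matrix (Fin 2) (Fin 2) K) = !![a, 0; c, d]) (had : a ≠ d) (had_pos : 0 < a * d)
    {N : Matrix (Fin 2) (Fin 2) K}
    (hN : N.det ≤ (N 0 0 - c / (d - a) * N 0 1) * (N 1 1 + c / (d - a) * N 0 1)) (m : ℤ) :
    4 * ((U ^ m).val * N).det ≤ ((U ^ m).val * N).trace ^ 2 := by
  have hpow : 0 < a ^ m * d ^ m := mul_zpow a d m ▸ zpow_pos had_pos m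
  rw [val_zpow_of_val_eq_lower hU had, eta_fin_two N, mul_fin_two, det_fin_two_of,
    trace_fin_two_of]
  rw [det_fin_two] at hN
  set s := c / (d - a)
  nlinarith [sq_nonneg (a ^ m * (N 0 0 - s * N 0 1) - d ^ m * (N 1 1 + s * N 0 1)),
    mul_le_mul_of_nonneg_left hN hpow.le]

end Matrix.GeneralLinearGroup

theorem Matrix.exists_mulVec_eq_smul_iff_four_mul_det_le_trace_sq
    (M : Matrix (Fin 2) (Fin 2) ℝ) :
    (∃ v : Fin 2 → ℝ, v ≠ 0 ∧ ∃ μ : ℝ, M *ᵥ v = μ • v) ↔ 4 * M.det ≤ M.trace ^ 2 := by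
  have h_eigen (μ : ℝ) : (∃ v : Fin 2 → ℝ, v ≠ 0 ∧ M *ᵥ v = μ • v) ↔ (M - μ • 1).det = 0 := by
    simp only [← exists_mulVec_eq_zero_iff, sub_mulVec, smul_mulVec, one_mulVec, sub_eq_zero]
  have h_char (μ : ℝ) : (M - μ • 1).det = 1 * (μ * μ) + -M.trace * μ + M.det := by
    simp only [det_fin_two, trace_fin_two, sub_apply, smul_apply, smul_eq_mul, one_apply_eq,
      one_apply_ne zero_ne_one, one_apply_ne one_ne_zero]
    ring
  calc (∃ v : Fin 2 → ℝ, v ≠ 0 ∧ ∃ μ : ℝ, M *ᵥ v = μ • v)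
      ↔ ∃ μ : ℝ, 1 * (μ * μ) + -M.trace * μ + M.det = 0 := by
        simp only [← h_char, ← h_eigen]
        exact ⟨fun ⟨v, hv, μ, h⟩ ↦ ⟨μ, v, hv, h⟩, fun ⟨μ, v, hv, h⟩ ↦ ⟨v, hv, μ, h⟩⟩
    _ ↔ 0 ≤ discrim 1 (-M.trace) M.det :=
        ⟨fun ⟨_, h⟩ ↦ discrim_eq_sq_of_quadratic_eq_zero h ▸ sq_nonneg _,
          fun h ↦ exists_quadratic_eq_zero one_ne_zero ⟨_, (Real.mul_self_sqrt h).symm⟩⟩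
    _ ↔ 4 * M.det ≤ M.trace ^ 2 := by rw [discrim, neg_sq, mul_one, sub_nonneg]

/-- For the matrices `A = [[13/100, 19/20], [0, 19/10]]` and `B = [[3/20, 0], [−3/50, 19/10]]`
in `GL(2, ℝ)`: for every integer `m`, each of `Aᵐ·B`, `Aᵐ·B⁻¹`, `Bᵐ·A`, `Bᵐ·A⁻¹` satisfies
`trace² ≥ 4·det` (hence has a real eigenvector, i.e., fixes a point of `ℝP¹`), while the
commutator `B⁻¹·A⁻¹·B·A` satisfies `trace² < 4·det = 4` (hence has no real eigenvector). -/
theorem gl2_example_primitive_fixed_points (A B : GL (Fin 2) ℝ)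
    (hA : (A : Matrix (Fin 2) (Fin 2) ℝ) = !![13/100, 19/20; 0, 19/10])
    (hB : (B : Matrix (Fin 2) (Fin 2) ℝ) = !![3/20, 0; -3/50, 19/10]) :
    (∀ m : ℤ, ∀ C ∈ ({A ^ m * B, A ^ m * B⁻¹, B ^ m * A, B ^ m * A⁻¹} : Set (GL (Fin 2) ℝ)),
      Matrix.trace (C : Matrix (Fin 2) (Fin 2) ℝ) ^ 2
          ≥ 4 * Matrix.det (C : Matrix (Fin 2) (Fin 2) ℝ) ∧
      ∃ v : Fin 2 → ℝ, v ≠ 0 ∧ ∃ μ : ℝ,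
        (C : Matrix (Fin 2) (Fin 2) ℝ).mulVec v = μ • v) ∧
    (Matrix.trace ((B⁻¹ * A⁻¹ * B * A : GL (Fin 2) ℝ) : Matrix (Fin 2) (Fin 2) ℝ) ^ 2
        < 4 * Matrix.det ((B⁻¹ * A⁻¹ * B * A : GL (Fin 2) ℝ) : Matrix (Fin 2) (Fin 2) ℝ) ∧
      Matrix.det ((B⁻¹ * A⁻¹ * B * A : GL (Fin 2) ℝ) : Matrix (Fin 2) (Fin 2) ℝ) = 1 ∧
      ¬ ∃ v : Fin 2 → ℝ, v ≠ 0 ∧ ∃ μ : ℝ,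
        ((B⁻¹ * A⁻¹ * B * A : GL (Fin 2) ℝ) : Matrix (Fin 2) (Fin 2) ℝ).mulVec v = μ • v) := by
  open GeneralLinearGroup in
  have hA_inv : ((A⁻¹ : GL (Fin 2) ℝ) : Matrix (Fin 2) (Fin 2) ℝ) =
      !![100/13, -50/13; 0, 10/19] := by
    rw [← _root_.zpow_neg_one, val_zpow_of_val_eq_upper hA (by norm_num)]
    norm_num
  have hB_inv : ((B⁻¹ : GL (Fin 2) ℝ) : Matrix (Fin 2) (Fin 2) ℝ) =
      !![20/3, 0; 4/19, 10/19] := by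
    rw [← _root_.zpow_neg_one, val_zpow_of_val_eq_lower hB (by norm_num)]
    norm_num
  have h_det : det ((B⁻¹ * A⁻¹ * B * A : GL (Fin 2) ℝ) : Matrix (Fin 2) (Fin 2) ℝ) = 1 := by
    simpa only [commutatorElement_def, inv_inv] using det_val_commutatorElement B⁻¹ A⁻¹
  have h_disc : trace ((B⁻¹ * A⁻¹ * B * A : GL (Fin 2) ℝ) : Matrix (Fin 2) (Fin 2) ℝ) ^ 2 <
      4 * det ((B⁻¹ * A⁻¹ * B * A : GL (Fin 2) ℝ) : Matrix (Fin 2) (Fin 2) ℝ) := by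
    rw [h_det, Units.val_mul, Units.val_mul, Units.val_mul, hA_inv, hB_inv, hA, hB]
    norm_num [mul_fin_two]
  refine ⟨fun m C hC ↦ ?_, h_disc, h_det,
    (exists_mulVec_eq_smul_iff_four_mul_det_le_trace_sq _).not.mpr (not_le.mpr h_disc)⟩
  suffices h : 4 * det (C : Matrix (Fin 2) (Fin 2) ℝ) ≤ trace (C : Matrix (Fin 2) (Fin 2) ℝ) ^ 2
    from ⟨h, (exists_mulVec_eq_smul_iff_four_mul_det_le_trace_sq _).mpr h⟩
  rcases hC with rfl | rfl | rfl | rfl <;> rw [Units.val_mul]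
  · exact four_mul_det_le_trace_sq_zpow_mul_of_upper hA (by norm_num) (by norm_num)
      (by rw [hB]; norm_num) m
  · exact four_mul_det_le_trace_sq_zpow_mul_of_upper hA (by norm_num) (by norm_num)
      (by rw [hB_inv]; norm_num) m
  · exact four_mul_det_le_trace_sq_zpow_mul_of_lower hB (by norm_num) (by norm_num)
      (by rw [hA]; norm_num) m
  · exact four_mul_det_le_trace_sq_zpow_mul_of_lower hB (by norm_num) (by norm_num)
      (by rw [hA_inv]; norm_num) m
end

section
/- Let f, g : ℝ → ℝ be continuous maps with f monotone increasing, and let x₀ < x₁ be real numbers such that f(x₀) = g(x₀), f(x₀) < x₀, f(x₁) = x₁, and g(x₁) < x₁. Then for every integer n ≥ 1 there exists x ∈ [x₀, x₁] such that f⁽ⁿ⁾(x) = g(x), where f⁽ⁿ⁾ denotes the n-th iterate of f. -/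
/-- Let `f, g : ℝ → ℝ` be continuous with `f` monotone increasing, and `x₀ < x₁` with
`f(x₀) = g(x₀)`, `f(x₀) < x₀`, `f(x₁) = x₁`, `g(x₁) < x₁`. Then for every `n ≥ 1` there is
`x ∈ [x₀, x₁]` with `f⁽ⁿ⁾(x) = g(x)`, where `f⁽ⁿ⁾` is the `n`-th iterate of `f`. -/
theorem exists_iterate_eq_of_crossing (f g : ℝ → ℝ)
    (hfc : Continuous f) (hgc : Continuous g) (hfm : Monotone f)
    (x₀ x₁ : ℝ) (hx : x₀ < x₁)
    (h1 : f x₀ = g x₀) (h2 : f x₀ < x₀) (h3 : f x₁ = x₁) (h4 : g x₁ < x₁) :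
    ∀ n : ℕ, 1 ≤ n → ∃ x ∈ Set.Icc x₀ x₁, f^[n] x = g x := by
  intro n hn
  have below_at_x₀ : f^[n] x₀ ≤ g x₀ :=
    h1 ▸ hfm.antitone_iterate_of_map_le h2.le hn
  have above_at_x₁ : g x₁ ≤ f^[n] x₁ := by
    rw [Function.iterate_fixed h3 n]
    exact h4.le
  exact isPreconnected_Icc.intermediate_value₂ (Set.left_mem_Icc.2 hx.le)
    (Set.right_mem_Icc.2 hx.le) (hfc.iterate n).continuousOn hgc.continuousOn
    below_at_x₀ above_at_x₁
end

section
/- Let f be an order-isomorphism of ℝ (a strictly increasing bijection ℝ → ℝ, necessarily a homeomorphism), let (gᵢ)_{i ∈ ι} be a family of order-isomorphisms of ℝ, and let (nᵢ), (mᵢ) be families of nonzero integers such that f ∘ gᵢ^{nᵢ} ∘ f⁻¹ = gᵢ^{mᵢ} for every i. If f has a fixed point and there exists a point fixed simultaneously by all gᵢ, then there exists a point p ∈ ℝ with f(p) = p and gᵢ(p) = p for every i. (Equivalently, in Proposition 8.3 of the paper: if the group generated by f and the gᵢ has no global fixed point on ℝ while ⋂ᵢ Fix(gᵢ) ≠ ∅,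 then Fix(f) = ∅.) -/
/-!
A strictly monotone permutation has the same fixed points as each of its nonzero powers, so the
relations `f gᵢ^{nᵢ} f⁻¹ = gᵢ^{mᵢ}` make the closed set `S = ⋂ Fix(gᵢ)` invariant under `f`.
An increasing homeomorphism that fixes `q` and preserves a closed nonempty set `S` fixes the
least point of `S` above `q`, or, if there is none, the greatest point of `S` below `q`.
-/

open Function Set

namespace Equiv.Perm

variable {α : Type*}

theorem image_fixedPoints_conj (f a : Perm α) :
    f '' fixedPoints a = fixedPoints ⇑(f * a * f⁻¹) := by
  ext y
  simp [f.image_eq_preimage_symm, IsFixedPt, ← f.eq_symm_apply]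

theorem isFixedPt_of_isFixedPt_zpow [LinearOrder α] {g : Perm α} (hg : StrictMono g)
    {k : ℤ} (hk : k ≠ 0) {x : α} (h : IsFixedPt ⇑(g ^ k) x) : IsFixedPt g x := by
  have hpow : IsFixedPt ⇑(g ^ k.natAbs) x := by
    rcases k.natAbs_eq with hk' | hk'
    · rwa [hk', zpow_natCast] at h
    · rw [hk', zpow_neg, zpow_natCast] at h
      simpa using h.perm_inv
  rw [coe_pow] at hpow
  exact (Commute.id_right.iterate_pos_eq_iff_map_eq hg.monotone strictMono_id
    (Int.natAbs_pos.mpr hk)).mp (hpow.trans (congrFun (iterate_id _) x).symm)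

theorem fixedPoints_zpow_of_strictMono [LinearOrder α] {g : Perm α} (hg : StrictMono g)
    {k : ℤ} (hk : k ≠ 0) : fixedPoints ⇑(g ^ k) = fixedPoints g :=
  Set.ext fun _ ↦ ⟨isFixedPt_of_isFixedPt_zpow hg hk, (IsFixedPt.perm_zpow · k)⟩

end Equiv.Perm

open Equiv.Perm

theorem OrderIso.exists_fixedPt_mem_of_image_eq {α : Type*} [ConditionallyCompleteLinearOrder α]
    [TopologicalSpace α] [OrderTopology α] (e : α ≃o α) {S : Set α} (hS : IsClosed S)
    (hne : S.Nonempty) (hSe : e '' S = S) {q : α} (hq : e q = q) : ∃ p ∈ S, e p = p := by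
  obtain ⟨x, hx⟩ := hne
  rcases le_total q x with hqx | hxq
  · have hT : (S ∩ Ici q).Nonempty := ⟨x, hx, hqx⟩
    refine ⟨sInf (S ∩ Ici q), ((hS.inter isClosed_Ici).csInf_mem hT ⟨q, fun _ h ↦ h.2⟩).1, ?_⟩
    rw [e.map_csInf' hT ⟨q, fun _ h ↦ h.2⟩, image_inter e.injective, hSe, e.image_Ici, hq]
  · have hT : (S ∩ Iic q).Nonempty := ⟨x, hx, hxq⟩
    refine ⟨sSup (S ∩ Iic q), ((hS.inter isClosed_Iic).csSup_mem hT ⟨q, fun _ h ↦ h.2⟩).1, ?_⟩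
    rw [e.map_csSup' hT ⟨q, fun _ h ↦ h.2⟩, image_inter e.injective, hSe, e.image_Iic, hq]

/-- Let `f` be an order-isomorphism of `ℝ` (a strictly increasing bijection), `(gᵢ)` a family
of order-isomorphisms of `ℝ`, and `(nᵢ)`, `(mᵢ)` families of nonzero integers with
`f ∘ gᵢ^{nᵢ} ∘ f⁻¹ = gᵢ^{mᵢ}` for every `i`. If `f` has a fixed point and there is a point
fixed simultaneously by all `gᵢ`, then there is a point `p` fixed by `f` and by every `gᵢ`. -/
theorem global_fixed_point_of_conj_relations {ι : Type*}
    (f : Equiv.Perm ℝ) (hf : StrictMono f)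
    (g : ι → Equiv.Perm ℝ) (hg : ∀ i, StrictMono (g i))
    (n m : ι → ℤ) (hn : ∀ i, n i ≠ 0) (hm : ∀ i, m i ≠ 0)
    (hconj : ∀ i, f * g i ^ n i * f⁻¹ = g i ^ m i)
    (hfix : ∃ x : ℝ, f x = x) (hgfix : ∃ x : ℝ, ∀ i, g i x = x) :
    ∃ p : ℝ, f p = p ∧ ∀ i, g i p = p := by
  set S := ⋂ i, fixedPoints (g i)
  have hS_closed : IsClosed S := isClosed_iInter fun i ↦
    isClosed_fixedPoints ((hg i).monotone.continuous_of_surjective (g i).surjective)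
  have hS_invariant : f '' S = S := by
    rw [image_iInter f.bijective]
    refine iInter_congr fun i ↦ ?_
    calc f '' fixedPoints (g i) = f '' fixedPoints ⇑(g i ^ n i) := by
          rw [fixedPoints_zpow_of_strictMono (hg i) (hn i)]
      _ = fixedPoints ⇑(g i ^ m i) := by rw [image_fixedPoints_conj, hconj i]
      _ = fixedPoints (g i) := fixedPoints_zpow_of_strictMono (hg i) (hm i)
  obtain ⟨q, hq⟩ := hfix
  obtain ⟨p, hpS, hp⟩ := (hf.orderIsoOfSurjective f f.surjective).exists_fixedPt_mem_of_image_eq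
    hS_closed (hgfix.imp fun _ h ↦ mem_iInter.mpr h) hS_invariant hq
  exact ⟨p, hp, fun i ↦ mem_iInter.mp hpS i⟩
end
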